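/- arXiv:1004.1007 — 3 statements merged into one kernel-verified Lean document; each statement's English description precedes it below -/
import Mathlib

section
/- For the circular transform R (integration over unit circles in ℝ²), the normal operator R*R is convolution against the explicit kernel K(x,y) = 4/(r√(4−r²)) for r = |x−y| < 2 and 0 for r ≥ 2; i.e., R*Rf(x) = ∫_{|x−y|<2} 4 f(y)/(|x−y|√(4−|x−y|²)) dy. -/
/-!
Write `u(α) = (cos α, sin α)` and let `S(r) = ∫₀^{2π} f(x + r u(α)) dα` (`angularIntegral`).
Substituting `β = α + φ` and using `u(α) + u(α + φ) = 2 cos(φ/2) u(α + φ/2)`, Fubini and the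
rotation invariance of `dα` turn the double integral into `∫₀^{2π} S(2 cos(φ/2)) dφ`. As `S` is
even, this is `2 ∫₀^π S(2 cos(φ/2)) dφ`, and `r = 2 cos(φ/2)` turns it into
`∫₀² 4 S(r) / √(4 - r²) dr`. In polar coordinates about `x` the right-hand side is the same radial
integral: the Jacobian `r` cancels the `1/r` of the kernel.
-/

open MeasureTheory Real

/-- The unit vector `(cos α, sin α)` in `ℝ²`. -/
noncomputable def unitVec (α : ℝ) : EuclideanSpace ℝ (Fin 2) :=
  (EuclideanSpace.equiv (Fin 2) ℝ).symm ![Real.cos α, Real.sin α]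

open Set

namespace CircleRadon

variable {E : Type*} [NormedAddCommGroup E] [NormedSpace ℝ E]

lemma unitVec_apply (α : ℝ) (i : Fin 2) : unitVec α i = ![cos α, sin α] i := rfl

lemma norm_unitVec (α : ℝ) : ‖unitVec α‖ = 1 := by
  simp [EuclideanSpace.norm_eq, unitVec_apply, Fin.sum_univ_two]

@[fun_prop]
lemma continuous_unitVec : Continuous unitVec :=
  (EuclideanSpace.equiv (Fin 2) ℝ).symm.continuous.comp <| continuous_pi fun i => by
    fin_cases i <;> simp only [Fin.zero_eta, Fin.mk_one, Matrix.cons_val] <;> fun_prop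

lemma unitVec_periodic : Function.Periodic unitVec (2 * π) := fun α => by
  ext i; fin_cases i <;> simp [unitVec_apply]

lemma unitVec_add_pi (α : ℝ) : unitVec (α + π) = -unitVec α := by
  ext i; fin_cases i <;> simp [unitVec_apply, cos_add_pi, sin_add_pi]

lemma unitVec_add_unitVec (α φ : ℝ) :
    unitVec α + unitVec (α + φ) = (2 * cos (φ / 2)) • unitVec (α + φ / 2) := by
  obtain ⟨β, rfl⟩ : ∃ β, α = β - φ / 2 := ⟨α + φ / 2, by ring⟩
  rw [sub_add_cancel, show β - φ / 2 + φ = β + φ / 2 by ring]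
  ext i
  fin_cases i <;> simp [unitVec_apply, cos_add, cos_sub, sin_add, sin_sub] <;> ring

lemma integral_comp_unitVec_add (g : EuclideanSpace ℝ (Fin 2) → E) (c : ℝ) :
    ∫ α in (0 : ℝ)..2 * π, g (unitVec (c + α)) = ∫ α in (0 : ℝ)..2 * π, g (unitVec α) := by
  rw [intervalIntegral.integral_comp_add_left (fun α => g (unitVec α)), add_zero]
  simpa using (unitVec_periodic.comp g).intervalIntegral_add_eq c 0

noncomputable def angularIntegral (f : EuclideanSpace ℝ (Fin 2) → E) (x : EuclideanSpace ℝ (Fin 2))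
    (r : ℝ) : E :=
  ∫ α in (0 : ℝ)..2 * π, f (x + r • unitVec α)

variable {f : EuclideanSpace ℝ (Fin 2) → E} {x : EuclideanSpace ℝ (Fin 2)}

lemma continuous_angularIntegral (hf : Continuous f) : Continuous (angularIntegral f x) :=
  intervalIntegral.continuous_parametric_intervalIntegral_of_continuous' (by fun_prop) _ _

lemma angularIntegral_neg (r : ℝ) : angularIntegral f x (-r) = angularIntegral f x r := by
  simp_rw [angularIntegral, ← integral_comp_unitVec_add (fun v => f (x + r • v)) π, add_comm π,
    unitVec_add_pi, smul_neg, neg_smul]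

lemma integral_integral_comp_unitVec_add_unitVec (hf : Continuous f) :
    ∫ α in (0 : ℝ)..2 * π, ∫ β in (0 : ℝ)..2 * π, f (x + unitVec α + unitVec β) =
      ∫ φ in (0 : ℝ)..2 * π, angularIntegral f x (2 * cos (φ / 2)) := by
  have h2π : (0 : ℝ) ≤ 2 * π := by positivity
  have hF : Continuous fun p : ℝ × ℝ => f (x + (2 * cos (p.2 / 2)) • unitVec (p.1 + p.2 / 2)) :=
    hf.comp (by fun_prop)
  have hFint : Integrable (fun p : ℝ × ℝ => f (x + (2 * cos (p.2 / 2)) • unitVec (p.1 + p.2 / 2)))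
      ((volume.restrict (Ioc 0 (2 * π))).prod (volume.restrict (Ioc 0 (2 * π)))) := by
    rw [Measure.prod_restrict]
    exact (hF.continuousOn.integrableOn_compact (isCompact_Icc.prod isCompact_Icc)).mono_set
      (prod_mono Ioc_subset_Icc_self Ioc_subset_Icc_self)
  calc ∫ α in (0 : ℝ)..2 * π, ∫ β in (0 : ℝ)..2 * π, f (x + unitVec α + unitVec β)
      = ∫ α in (0 : ℝ)..2 * π, ∫ φ in (0 : ℝ)..2 * π,
          f (x + (2 * cos (φ / 2)) • unitVec (α + φ / 2)) := by
        refine intervalIntegral.integral_congr fun α _ => ?_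
        simp_rw [← integral_comp_unitVec_add (fun v => f (x + unitVec α + v)) α, add_assoc,
          unitVec_add_unitVec]
    _ = ∫ φ in (0 : ℝ)..2 * π, ∫ α in (0 : ℝ)..2 * π,
          f (x + (2 * cos (φ / 2)) • unitVec (α + φ / 2)) := by
        simp_rw [intervalIntegral.integral_of_le h2π]
        exact integral_integral_swap hFint
    _ = ∫ φ in (0 : ℝ)..2 * π, angularIntegral f x (2 * cos (φ / 2)) := by
        refine intervalIntegral.integral_congr fun φ _ => ?_
        simp_rw [angularIntegral, add_comm _ (φ / 2)]
        exact integral_comp_unitVec_add (fun v => f (x + (2 * cos (φ / 2)) • v)) (φ / 2)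

lemma integral_comp_two_cos_half_of_even {A : ℝ → E} (hA : Continuous A)
    (heven : ∀ r, A (-r) = A r) :
    ∫ φ in (0 : ℝ)..2 * π, A (2 * cos (φ / 2)) =
      (2 : ℝ) • ∫ φ in (0 : ℝ)..π, A (2 * cos (φ / 2)) := by
  have hint : ∀ a b : ℝ, IntervalIntegrable (fun φ => A (2 * cos (φ / 2))) volume a b :=
    fun a b => (by fun_prop : Continuous fun φ => A (2 * cos (φ / 2))).intervalIntegrable a b
  have hreflect :
      ∫ φ in π..2 * π, A (2 * cos (φ / 2)) = ∫ φ in (0 : ℝ)..π, A (2 * cos (φ / 2)) := by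
    have h := intervalIntegral.integral_comp_sub_left (fun φ => A (2 * cos (φ / 2)))
      (a := 0) (b := π) (2 * π)
    rw [show 2 * π - π = π by ring, sub_zero] at h
    rw [← h]
    refine intervalIntegral.integral_congr fun φ _ => ?_
    rw [show (2 * π - φ) / 2 = π - φ / 2 by ring, cos_pi_sub, mul_neg, heven]
  rw [← intervalIntegral.integral_add_adjacent_intervals (hint 0 π) (hint π (2 * π)), hreflect,
    two_smul]

/-- The inverse of `φ ↦ 2 cos (φ / 2)` on `(0, π)`. -/
noncomputable def twoArccosHalf (r : ℝ) : ℝ := 2 * arccos (r / 2)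

lemma twoArccosHalf_image : twoArccosHalf '' Ioo 0 2 = Ioo 0 π := by
  ext φ
  constructor
  · rintro ⟨r, ⟨hr0, hr2⟩, rfl⟩
    have h1 : 0 < arccos (r / 2) := arccos_pos.2 (by linarith)
    have h2 : arccos (r / 2) < π / 2 := arccos_lt_pi_div_two.2 (by linarith)
    exact ⟨by unfold twoArccosHalf; linarith, by unfold twoArccosHalf; linarith⟩
  · rintro ⟨hφ0, hφπ⟩
    refine ⟨2 * cos (φ / 2), ⟨?_, ?_⟩, ?_⟩
    · have := cos_pos_of_mem_Ioo (x := φ / 2) ⟨by linarith, by linarith⟩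
      linarith
    · have := cos_lt_cos_of_nonneg_of_le_pi le_rfl (by linarith) (by linarith : 0 < φ / 2)
      rw [cos_zero] at this
      linarith
    · rw [twoArccosHalf, mul_div_cancel_left₀ _ two_ne_zero, arccos_cos (by linarith) (by linarith)]
      ring

lemma twoArccosHalf_injOn : InjOn twoArccosHalf (Ioo 0 2) := fun r hr s hs h => by
  have hmem : ∀ t ∈ Ioo (0 : ℝ) 2, t / 2 ∈ Icc (-1 : ℝ) 1 :=
    fun t ht => ⟨by linarith [ht.1], by linarith [ht.2]⟩
  have : r / 2 = s / 2 :=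
    arccos_injOn (hmem r hr) (hmem s hs) (by simpa [twoArccosHalf] using h)
  linarith

lemma hasDerivAt_twoArccosHalf {r : ℝ} (hr : r ∈ Ioo (-2 : ℝ) 2) :
    HasDerivAt twoArccosHalf (-(2 / √(4 - r ^ 2))) r := by
  have hsqrt : √(4 - r ^ 2) = 2 * √(1 - (r / 2) ^ 2) := by
    rw [show 4 - r ^ 2 = 2 ^ 2 * (1 - (r / 2) ^ 2) by ring, sqrt_mul' _ (by nlinarith [hr.1, hr.2]),
      sqrt_sq zero_le_two]
  have h := ((hasDerivAt_arccos (x := r / 2) (by linarith [hr.1]) (by linarith [hr.2])).comp r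
    ((hasDerivAt_id r).div_const 2)).const_mul 2
  refine h.congr_deriv ?_
  rw [hsqrt]
  field_simp

lemma hasDerivWithinAt_twoArccosHalf :
    ∀ r ∈ Ioo (0 : ℝ) 2, HasDerivWithinAt twoArccosHalf (-(2 / √(4 - r ^ 2))) (Ioo 0 2) r :=
  fun r hr => (hasDerivAt_twoArccosHalf ⟨by linarith [hr.1], hr.2⟩).hasDerivWithinAt

lemma abs_deriv_twoArccosHalf_smul (g : ℝ → E) {r : ℝ} (hr : r ∈ Ioo (0 : ℝ) 2) :
    |-(2 / √(4 - r ^ 2))| • g (2 * cos (twoArccosHalf r / 2)) = (2 / √(4 - r ^ 2)) • g r := by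
  rw [abs_neg, abs_of_nonneg (by positivity), twoArccosHalf, mul_div_cancel_left₀ _ two_ne_zero,
    cos_arccos (by linarith [hr.1]) (by linarith [hr.2]), mul_div_cancel₀ _ two_ne_zero]

lemma integral_Ioo_comp_two_cos_half (g : ℝ → E) :
    ∫ φ in Ioo 0 π, g (2 * cos (φ / 2)) = ∫ r in Ioo 0 2, (2 / √(4 - r ^ 2)) • g r := by
  rw [← twoArccosHalf_image, integral_image_eq_integral_abs_deriv_smul measurableSet_Ioo
    hasDerivWithinAt_twoArccosHalf twoArccosHalf_injOn]
  exact setIntegral_congr_fun measurableSet_Ioo fun r hr => abs_deriv_twoArccosHalf_smul _ hr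

lemma integrableOn_Ioo_comp_two_cos_half_iff (g : ℝ → E) :
    IntegrableOn (fun φ => g (2 * cos (φ / 2))) (Ioo 0 π) ↔
      IntegrableOn (fun r => (2 / √(4 - r ^ 2)) • g r) (Ioo 0 2) := by
  rw [← twoArccosHalf_image, integrableOn_image_iff_integrableOn_abs_deriv_smul measurableSet_Ioo
    hasDerivWithinAt_twoArccosHalf twoArccosHalf_injOn]
  exact integrableOn_congr_fun (fun r hr => abs_deriv_twoArccosHalf_smul _ hr) measurableSet_Ioo

lemma integral_eq_integral_polarCoord_target (h : EuclideanSpace ℝ (Fin 2) → E) :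
    ∫ z, h z = ∫ p in polarCoord.target, p.1 • h (p.1 • unitVec p.2) := by
  let e : (ℝ × ℝ) ≃ᵐ EuclideanSpace ℝ (Fin 2) :=
    MeasurableEquiv.finTwoArrow.symm.trans (MeasurableEquiv.toLp 2 (Fin 2 → ℝ))
  have he : MeasurePreserving e :=
    (EuclideanSpace.volume_preserving_symm_measurableEquiv_toLp (Fin 2)).symm.comp
      (volume_preserving_finTwoArrow ℝ).symm
  have he_polar : ∀ p, e (polarCoord.symm p) = p.1 • unitVec p.2 := fun p => by
    ext i
    fin_cases i <;> simp [e, unitVec, polarCoord_symm_apply, MeasurableEquiv.finTwoArrow]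
  rw [← he.integral_comp e.measurableEmbedding, ← integral_comp_polarCoord_symm]
  simp_rw [he_polar]

lemma setIntegral_Ioo_neg_pi_pi_eq_angularIntegral (r : ℝ) :
    ∫ θ in Ioo (-π) π, f (x + r • unitVec θ) = angularIntegral f x r := by
  have h := (unitVec_periodic.comp fun v => f (x + r • v)).intervalIntegral_add_eq (-π) 0
  rw [show -π + 2 * π = π by ring, zero_add] at h
  rw [← integral_Ioc_eq_integral_Ioo, ← intervalIntegral.integral_of_le (by linarith [pi_pos])]
  exact h

lemma integral_smul_comp_dist_eq_integral_Ioi {k : ℝ → ℝ}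
    (hk : IntegrableOn (fun r => r * k r) (Ioi 0)) (hf : Continuous f) {C : ℝ}
    (hC : ∀ y, ‖f y‖ ≤ C) :
    ∫ y, k (dist x y) • f y = ∫ r in Ioi 0, (r * k r) • angularIntegral f x r := by
  have hint : IntegrableOn (fun p : ℝ × ℝ => (p.1 * k p.1) • f (x + p.1 • unitVec p.2))
      (Ioi 0 ×ˢ Ioo (-π) π) := by
    rw [IntegrableOn, Measure.volume_eq_prod, ← Measure.prod_restrict]
    have hconst : IntegrableOn (fun _ => C) (Ioo (-π) π) :=
      integrableOn_const measure_Ioo_lt_top.ne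
    refine Integrable.mono' (hk.norm.mul_prod hconst) ?_ (ae_of_all _ fun p => ?_)
    · exact hk.aestronglyMeasurable.comp_fst.smul (hf.comp (by fun_prop)).aestronglyMeasurable
    · rw [norm_smul]
      exact mul_le_mul_of_nonneg_left (hC _) (norm_nonneg _)
  calc ∫ y, k (dist x y) • f y = ∫ z, k ‖z‖ • f (x + z) := by
        rw [← integral_add_left_eq_self (fun y => k (dist x y) • f y) x]
        simp_rw [dist_self_add_right]
    _ = ∫ p in Ioi 0 ×ˢ Ioo (-π) π, (p.1 * k p.1) • f (x + p.1 • unitVec p.2) := by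
        rw [integral_eq_integral_polarCoord_target, polarCoord_target]
        refine setIntegral_congr_fun (measurableSet_Ioi.prod measurableSet_Ioo) fun p hp => ?_
        rw [norm_smul, norm_unitVec, mul_one, norm_of_nonneg (le_of_lt hp.1), smul_smul]
    _ = ∫ r in Ioi 0, ∫ θ in Ioo (-π) π, (r * k r) • f (x + r • unitVec θ) :=
        setIntegral_prod _ hint
    _ = ∫ r in Ioi 0, (r * k r) • angularIntegral f x r := by
        simp_rw [integral_smul, setIntegral_Ioo_neg_pi_pi_eq_angularIntegral]

lemma sqrt_four_sub_sq_of_two_le {r : ℝ} (hr : 2 ≤ r) : √(4 - r ^ 2) = 0 :=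
  sqrt_eq_zero'.2 (by nlinarith)

lemma integrableOn_four_div_sqrt_four_sub_sq :
    IntegrableOn (fun r => 4 / √(4 - r ^ 2)) (Ioi 0) := by
  have hIoo : IntegrableOn (fun r => 4 / √(4 - r ^ 2)) (Ioo 0 2) := by
    have h := (integrableOn_Ioo_comp_two_cos_half_iff (fun _ => (2 : ℝ))).1
      (integrableOn_const measure_Ioo_lt_top.ne)
    refine h.congr_fun (fun r _ => ?_) measurableSet_Ioo
    simp only [smul_eq_mul]
    ring
  have hIci : IntegrableOn (fun r => 4 / √(4 - r ^ 2)) (Ici 2) :=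
    integrableOn_zero.congr_fun (fun r hr => by simp [sqrt_four_sub_sq_of_two_le hr])
      measurableSet_Ici
  simpa [Ioo_union_Ici_eq_Ioi two_pos] using hIoo.union hIci

lemma integral_integral_comp_unitVec_add_unitVec_eq_integral_Ioo (hf : Continuous f) :
    ∫ α in (0 : ℝ)..2 * π, ∫ β in (0 : ℝ)..2 * π, f (x + unitVec α + unitVec β) =
      ∫ r in Ioo 0 2, (4 / √(4 - r ^ 2)) • angularIntegral f x r := by
  rw [integral_integral_comp_unitVec_add_unitVec hf, integral_comp_two_cos_half_of_even
    (continuous_angularIntegral hf) angularIntegral_neg, intervalIntegral.integral_of_le pi_pos.le,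
    integral_Ioc_eq_integral_Ioo, integral_Ioo_comp_two_cos_half, ← integral_smul]
  simp_rw [smul_smul]
  ring_nf

lemma setIntegral_dist_lt_two_eq_integral_Ioo (hf : Continuous f) {C : ℝ} (hC : ∀ y, ‖f y‖ ≤ C) :
    ∫ y in {y | dist x y < 2}, (4 / (dist x y * √(4 - dist x y ^ 2))) • f y =
      ∫ r in Ioo 0 2, (4 / √(4 - r ^ 2)) • angularIntegral f x r := by
  have hk : ∀ r ∈ Ioi (0 : ℝ), r * (4 / (r * √(4 - r ^ 2))) = 4 / √(4 - r ^ 2) := fun r hr => by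
    rw [← mul_div_assoc, mul_div_mul_left _ _ (ne_of_gt hr)]
  -- outside the disc the kernel is `4 / 0 = 0`
  rw [setIntegral_eq_integral_of_forall_compl_eq_zero fun y hy => by
      rw [sqrt_four_sub_sq_of_two_le (not_lt.1 hy), mul_zero, div_zero, zero_smul],
    integral_smul_comp_dist_eq_integral_Ioi (integrableOn_four_div_sqrt_four_sub_sq.congr_fun
      (fun r hr => (hk r hr).symm) measurableSet_Ioi) hf hC,
    setIntegral_congr_fun measurableSet_Ioi fun r hr => by rw [hk r hr]]
  refine setIntegral_eq_of_subset_of_forall_sdiff_eq_zero measurableSet_Ioi Ioo_subset_Ioi_self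
    fun r hr => ?_
  rw [sqrt_four_sub_sq_of_two_le (not_lt.1 fun h => hr.2 ⟨hr.1, h⟩), div_zero, zero_smul]

end CircleRadon

open CircleRadon

/-- The normal operator `R*R` of the circular transform is convolution against the
kernel `4/(r √(4 − r²))`, `r = |x − y| < 2`. -/
theorem circleRadon_normal_operator_kernel (f : EuclideanSpace ℝ (Fin 2) → ℂ)
    (hf : Continuous f) (hsupp : HasCompactSupport f) (x : EuclideanSpace ℝ (Fin 2)) :
    (∫ α in (0:ℝ)..(2 * π), ∫ β in (0:ℝ)..(2 * π), f (x + unitVec α + unitVec β)) =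
      ∫ y in {y : EuclideanSpace ℝ (Fin 2) | dist x y < 2},
        ((4 / (dist x y * Real.sqrt (4 - dist x y ^ 2)) : ℝ) : ℂ) * f y := by
  obtain ⟨y₀, hy₀⟩ := hf.norm.exists_forall_ge_of_hasCompactSupport hsupp.norm
  simp_rw [← Complex.real_smul]
  rw [integral_integral_comp_unitVec_add_unitVec_eq_integral_Ioo hf,
    setIntegral_dist_lt_two_eq_integral_Ioo hf hy₀]
end

section
/- For unit-speed magnetic geodesics in ℝ³ with constant field (0,0,α), the point γ(π/α) equals γ(0) + α^{-1}(−2r sin θ, 2r cos θ, π z), where (r, θ, z) are the cylindrical coordinates of γ̇(0) with r² + z² = 1; consequently the set of such endpoints, as the unit initial velocity varies, is contained in the ellipsoid {q : (1/4)(q₁−p₁)² + (1/4)(q₂−p₂)² + (1/π²)(q₃−p₃)² = α^{-2}} with p = γ(0). -/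
open Real

/-!
At time `π / a` the horizontal projection of the geodesic, a circle of radius `r / a` run at
angular speed `a`, has made half a turn, so it sits at the antipode `2 (r / a)(-sin θ, cos θ)` of
its starting point, while the vertical coordinate has risen by `π z / a`. With `r² + z² = 1` the
weighted squared displacement is `a⁻² (sin² θ + cos² θ) r² + a⁻² z² = a⁻²`.
-/

theorem sin_mul_pi_div_add {a : ℝ} (ha : a ≠ 0) (θ : ℝ) : sin (a * (π / a) + θ) = -sin θ := by
  rw [mul_div_cancel₀ π ha, add_comm, sin_add_pi]

theorem cos_mul_pi_div_add {a : ℝ} (ha : a ≠ 0) (θ : ℝ) : cos (a * (π / a) + θ) = -cos θ := by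
  rw [mul_div_cancel₀ π ha, add_comm, cos_add_pi]

theorem half_turn_weighted_sq (a r θ z : ℝ) :
    (1 / 4) * (a⁻¹ * (-2 * r * sin θ)) ^ 2 + (1 / 4) * (a⁻¹ * (2 * r * cos θ)) ^ 2 +
      (1 / π ^ 2) * (a⁻¹ * (π * z)) ^ 2 = a⁻¹ ^ 2 * (r ^ 2 + z ^ 2) := by
  have hπ : (1 / π ^ 2) * (a⁻¹ * (π * z)) ^ 2 = a⁻¹ ^ 2 * z ^ 2 := by
    field_simp [pi_ne_zero]
  rw [hπ]
  linear_combination a⁻¹ ^ 2 * r ^ 2 * sin_sq_add_cos_sq θ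

theorem magnetic_conjugate_locus_general (a r θ z : ℝ) (ha : 0 < a)
    (hunit : r ^ 2 + z ^ 2 = 1) (p : Fin 3 → ℝ) :
    let γ : ℝ → Fin 3 → ℝ := fun t =>
      ![p 0 + (r / a) * (Real.sin (a * t + θ) - Real.sin θ),
        p 1 + (r / a) * (-Real.cos (a * t + θ) + Real.cos θ),
        p 2 + t * z]
    let q : Fin 3 → ℝ := γ (π / a)
    q = ![p 0 + a⁻¹ * (-2 * r * Real.sin θ),
          p 1 + a⁻¹ * (2 * r * Real.cos θ),
          p 2 + a⁻¹ * (π * z)] ∧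
      (1 / 4) * (q 0 - p 0) ^ 2 + (1 / 4) * (q 1 - p 1) ^ 2 +
        (1 / π ^ 2) * (q 2 - p 2) ^ 2 = (a⁻¹) ^ 2 := by
  intro γ q
  have hq : q = ![p 0 + a⁻¹ * (-2 * r * sin θ), p 1 + a⁻¹ * (2 * r * cos θ),
      p 2 + a⁻¹ * (π * z)] := by
    simp only [q, γ, sin_mul_pi_div_add ha.ne', cos_mul_pi_div_add ha.ne']
    ext i
    fin_cases i <;>
      simp only [Fin.zero_eta, Fin.mk_one, Fin.reduceFinMk, Matrix.cons_val_zero,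
        Matrix.cons_val_one, Matrix.cons_val, add_right_inj] <;> ring
  refine ⟨hq, ?_⟩
  simp only [hq, Matrix.cons_val_zero, Matrix.cons_val_one, Matrix.cons_val_two,
    Matrix.head_cons, Matrix.tail_cons, add_sub_cancel_left]
  rw [half_turn_weighted_sq, hunit, mul_one]

/-- For unit-speed magnetic geodesics in `ℝ³` with constant field `(0,0,a)`,
`γ(π/a) = γ(0) + a⁻¹(−2r sin θ, 2r cos θ, πz)`, and the endpoint lies on the ellipsoid
`(1/4)(q₁−p₁)² + (1/4)(q₂−p₂)² + (1/π²)(q₃−p₃)² = a⁻²`. -/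
theorem magnetic_conjugate_locus (a r θ z : ℝ) (ha : 0 < a) (hr : 0 ≤ r)
    (hunit : r ^ 2 + z ^ 2 = 1) (p : Fin 3 → ℝ) :
    let γ : ℝ → Fin 3 → ℝ := fun t =>
      ![p 0 + (r / a) * (Real.sin (a * t + θ) - Real.sin θ),
        p 1 + (r / a) * (-Real.cos (a * t + θ) + Real.cos θ),
        p 2 + t * z]
    let q : Fin 3 → ℝ := γ (π / a)
    q = ![p 0 + a⁻¹ * (-2 * r * Real.sin θ),
          p 1 + a⁻¹ * (2 * r * Real.cos θ),
          p 2 + a⁻¹ * (π * z)] ∧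
      (1 / 4) * (q 0 - p 0) ^ 2 + (1 / 4) * (q 1 - p 1) ^ 2 +
        (1 / π ^ 2) * (q 2 - p 2) ^ 2 = (a⁻¹) ^ 2 :=
  magnetic_conjugate_locus_general a r θ z ha hunit p
end

section
/- Let F : ℝⁿ → ℝⁿ be smooth near v₀ with det dF(v₀) = 0, and suppose the kernel of dF(v₀) is one-dimensional, spanned by ∂/∂vₙ, the critical set S = {det dF = 0} is a smooth hypersurface near v₀ with tangent space spanned by ∂/∂v₁,…,∂/∂v_{n−1}, ∂ₙ(det dF)(v₀) ≠ 0, and ∂₁F(v₀),…,∂_{n−1}F(v₀) are linearly independent. Then: F_{nα}(v₀) ∈ span(F₁(v₀),…,F_{n−1}(v₀)) for α = 1,…,n−1, and F_{nn}(v₀) ∉ span(F₁(v₀),…,F_{n−1}(v₀)); here F_i, F_{ij} denote first and second partial derivatives. -/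
open Function

/-- The determinant with respect to the standard basis of `ℝ^(n+1)`, as a continuous
multilinear map in the `n+1` column vectors. -/
noncomputable def detC (n : ℕ) :
    ContinuousMultilinearMap ℝ (fun _ : Fin (n+1) => (Fin (n+1) → ℝ)) ℝ where
  toMultilinearMap := (Pi.basisFun ℝ (Fin (n+1))).det.toMultilinearMap
  cont := by
    have h : ⇑(Pi.basisFun ℝ (Fin (n+1))).det.toMultilinearMap =
        fun m : Fin (n+1) → (Fin (n+1) → ℝ) =>
          Matrix.det (Matrix.of fun i j => m j i) := by
      funext m
      show (Pi.basisFun ℝ (Fin (n+1))).det m = _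
      have hm : (Pi.basisFun ℝ (Fin (n+1))).toMatrix m =
          Matrix.of fun i j => m j i := by
        ext i j
        simp [Module.Basis.toMatrix_apply]
      rw [Module.Basis.det_apply, hm]
    show Continuous ⇑(Pi.basisFun ℝ (Fin (n+1))).det.toMultilinearMap
    rw [h]
    exact Continuous.matrix_det
      (continuous_pi fun i => continuous_pi fun j =>
        (continuous_apply i).comp (continuous_apply j))

lemma detC_apply {n : ℕ} (m : Fin (n+1) → (Fin (n+1) → ℝ)) :
    detC n m = (Pi.basisFun ℝ (Fin (n+1))).det m := rfl

/-- For `n` linearly independent vectors in `ℝ^(n+1)`, the determinant against one further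
vector vanishes iff that vector lies in their span. -/
lemma det_snoc_eq_zero_iff {n : ℕ} (v : Fin n → (Fin (n+1) → ℝ))
    (hv : LinearIndependent ℝ v) (w : Fin (n+1) → ℝ) :
    (Pi.basisFun ℝ (Fin (n+1))).det (Fin.snoc v w) = 0 ↔
      w ∈ Submodule.span ℝ (Set.range v) := by
  constructor
  · intro h
    by_contra hw
    have hli : LinearIndependent ℝ (Fin.snoc v w : Fin (n+1) → (Fin (n+1) → ℝ)) :=
      linearIndependent_fin_snoc.2 ⟨hv, hw⟩
    have hcard : Fintype.card (Fin (n+1)) = Module.finrank ℝ (Fin (n+1) → ℝ) := by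
      simp
    have := (Pi.basisFun ℝ (Fin (n+1))).isUnit_det
      (basisOfLinearIndependentOfCardEqFinrank hli hcard)
    rw [coe_basisOfLinearIndependentOfCardEqFinrank] at this
    exact this.ne_zero h
  · intro hw
    apply AlternatingMap.map_linearDependent
    intro hli
    exact (linearIndependent_fin_snoc.1 hli).2 hw

/-- Warner's fold computations: let `F : ℝⁿ → ℝⁿ` be smooth near a fold critical point
`v₀` (kernel of `dF(v₀)` spanned by `∂/∂vₙ`, the other first partials independent, the
determinant of `dF` has vanishing derivative along the tangent directions
`∂/∂v₁, …, ∂/∂v_{n−1}` of the critical hypersurface and non-vanishing derivative along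
`∂/∂vₙ`). Then `F_{nα}(v₀) ∈ span(F₁(v₀), …, F_{n−1}(v₀))` for `α < n` and
`F_{nn}(v₀) ∉ span(F₁(v₀), …, F_{n−1}(v₀))`. -/
theorem fold_hessian_lemma (n : ℕ) (F : (Fin (n + 1) → ℝ) → (Fin (n + 1) → ℝ))
    (v₀ : Fin (n + 1) → ℝ) (hsm : ContDiffAt ℝ (⊤ : ℕ∞) F v₀)
    (e : Fin (n + 1) → (Fin (n + 1) → ℝ)) (he : ∀ i, e i = Pi.single i 1) :
    let D : (Fin (n + 1) → ℝ) → (Fin (n + 1) → ℝ) →L[ℝ] (Fin (n + 1) → ℝ) :=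
      fun v => fderiv ℝ F v
    let Δ : (Fin (n + 1) → ℝ) → ℝ := fun v =>
      LinearMap.det ((D v : (Fin (n + 1) → ℝ) →L[ℝ] (Fin (n + 1) → ℝ)) :
        (Fin (n + 1) → ℝ) →ₗ[ℝ] (Fin (n + 1) → ℝ))
    let Fsec : Fin (n + 1) → Fin (n + 1) → (Fin (n + 1) → ℝ) :=
      fun i j => fderiv ℝ (fun v => D v (e i)) v₀ (e j)
    ∀ (h0 : D v₀ (e (Fin.last n)) = 0)
      (hind : LinearIndependent ℝ (fun α : Fin n => D v₀ (e α.castSucc)))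
      (htan : ∀ α : Fin n, fderiv ℝ Δ v₀ (e α.castSucc) = 0)
      (hfold : fderiv ℝ Δ v₀ (e (Fin.last n)) ≠ 0),
      (∀ α : Fin n, Fsec (Fin.last n) α.castSucc ∈
        Submodule.span ℝ (Set.range fun β : Fin n => D v₀ (e β.castSucc))) ∧
      Fsec (Fin.last n) (Fin.last n) ∉
        Submodule.span ℝ (Set.range fun β : Fin n => D v₀ (e β.castSucc)) := by
  intro D Δ Fsec h0 hind htan hfold
  classical
  have heB : e = ⇑(Pi.basisFun ℝ (Fin (n+1))) := by
    funext i; rw [he i, Pi.basisFun_apply]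
  -- the second derivative of `F` at `v₀`
  have hsm' : ContDiffAt ℝ (⊤ : ℕ∞) (fderiv ℝ F) v₀ := hsm.fderiv_right (by simp)
  have hD' : HasFDerivAt (fderiv ℝ F) (fderiv ℝ (fderiv ℝ F) v₀) v₀ :=
    (hsm'.differentiableAt (by simp)).hasFDerivAt
  set f' := fderiv ℝ (fderiv ℝ F) v₀ with hf'
  have hg : ∀ i : Fin (n+1), HasFDerivAt (fun v => D v (e i))
      ((ContinuousLinearMap.apply ℝ (Fin (n+1) → ℝ) (e i)).comp f') v₀ :=
    fun i => (ContinuousLinearMap.apply ℝ (Fin (n+1) → ℝ) (e i)).hasFDerivAt.comp v₀ hD'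
  have hFsec : ∀ i j, Fsec i j = f' (e j) (e i) := by
    intro i j
    show fderiv ℝ (fun v => D v (e i)) v₀ (e j) = _
    rw [(hg i).fderiv]
    rfl
  -- `Δ` as a multilinear expression in the columns of `dF`
  have hΔeq : Δ = fun v => detC n (fun i => D v (e i)) := by
    funext v
    show LinearMap.det _ = (Pi.basisFun ℝ (Fin (n+1))).det _
    have h1 : (fun i => D v (e i)) =
        ((D v : (Fin (n+1) → ℝ) →ₗ[ℝ] (Fin (n+1) → ℝ)) : (Fin (n+1) → ℝ) → (Fin (n+1) → ℝ))
          ∘ ⇑(Pi.basisFun ℝ (Fin (n+1))) := by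
      funext i; rw [heB]; rfl
    rw [h1, Module.Basis.det_comp, Module.Basis.det_self, mul_one]
  have hΔ : HasFDerivAt Δ (∑ i, ((detC n).toContinuousLinearMap (fun j => D v₀ (e j)) i)
      ∘L ((ContinuousLinearMap.apply ℝ (Fin (n+1) → ℝ) (e i)).comp f')) v₀ := by
    rw [hΔeq]
    exact HasFDerivAt.multilinear_comp (detC n) hg
  -- rewriting the updated family as a `Fin.snoc`
  have hsnoc : ∀ w : Fin (n+1) → ℝ,
      Function.update (fun j => D v₀ (e j)) (Fin.last n) w =
        Fin.snoc (fun β : Fin n => D v₀ (e β.castSucc)) w := by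
    intro w; funext j
    refine Fin.lastCases ?_ ?_ j
    · simp
    · intro β
      rw [Function.update_of_ne (Fin.castSucc_lt_last β).ne, Fin.snoc_castSucc]
  -- the key formula for the derivative of `Δ`
  have key : ∀ k : Fin (n+1), fderiv ℝ Δ v₀ (e k) =
      (Pi.basisFun ℝ (Fin (n+1))).det
        (Fin.snoc (fun β : Fin n => D v₀ (e β.castSucc)) (Fsec (Fin.last n) k)) := by
    intro k
    rw [hΔ.fderiv]
    rw [ContinuousLinearMap.sum_apply]
    rw [Finset.sum_eq_single (Fin.last n)]
    · rw [hFsec]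
      simp only [ContinuousLinearMap.comp_apply, ContinuousLinearMap.apply_apply,
        ContinuousMultilinearMap.toContinuousLinearMap_apply]
      rw [hsnoc]
      rfl
    · intro i _ hi
      simp only [ContinuousLinearMap.comp_apply, ContinuousLinearMap.apply_apply,
        ContinuousMultilinearMap.toContinuousLinearMap_apply]
      apply (detC n).map_coord_zero (i := Fin.last n)
      rw [Function.update_of_ne (Ne.symm hi)]
      exact h0
    · intro h; exact absurd (Finset.mem_univ _) h
  constructor
  · intro α
    have hα := htan α
    rw [key] at hα
    exact (det_snoc_eq_zero_iff _ hind _).1 hα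
  · intro hmem
    apply hfold
    rw [key]
    exact (det_snoc_eq_zero_iff _ hind _).2 hmem
end
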